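/- arXiv:2601.05790 — 2 statements merged into one kernel-verified Lean document; each statement's English description precedes it below -/
import Mathlib

section
/- Let Γ be an ordered abelian group and Δ ≤ Γ a convex subgroup. In any ℵ₁-saturated elementary extension (Γ*, Δ*) of the pair (Γ, Δ), the short exact sequence 0 → Δ* → Γ* → Γ*/Δ* → 0 splits; that is, Γ* is isomorphic as an ordered abelian group to the lexicographic sum (Γ*/Δ*) ⊕_lex Δ*. -/
open FirstOrder

universe u v

/-- The first-order language of ordered abelian groups with an extra unary predicate
(for a distinguished convex subgroup): `0`, `-`, `+`, `<`, `P`. -/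
def oagPLang : Language where
  Functions n := match n with | 0 => Unit | 1 => Unit | 2 => Unit | _ => Empty
  Relations n := match n with | 1 => Unit | 2 => Unit | _ => Empty

/-- The `oagPLang`-structure on a linearly ordered abelian group with a distinguished
subgroup interpreting the predicate. -/
def oagPStructure (G : Type*) [AddCommGroup G] [LinearOrder G] [IsOrderedAddMonoid G] (Δ : AddSubgroup G) :
    oagPLang.Structure G where
  funMap {n} f x :=
    match n, f with
    | 0, _ => 0
    | 1, _ => -(x 0)
    | 2, _ => x 0 + x 1
    | (_+3), f => f.elim
  RelMap {n} r x :=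
    match n, r with
    | 1, _ => x 0 ∈ Δ
    | 2, _ => x 0 < x 1
    | 0, r => r.elim
    | (_+3), r => r.elim

/-- `ℵ₁`-saturation of an `L`-structure `M`: every countably-parametrized, finitely
realizable set of formulas in one free variable is realized in `M`. -/
def AlephOneSaturated (L : Language) (M : Type*) [L.Structure M] : Prop :=
  ∀ (params : ℕ → M) (S : Set (L.Formula (ℕ ⊕ Unit))),
    (∀ s : Finset (L.Formula (ℕ ⊕ Unit)), ↑s ⊆ S →
      ∃ x : M, ∀ φ ∈ s, φ.Realize (Sum.elim params fun _ => x)) →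
    ∃ x : M, ∀ φ ∈ S, φ.Realize (Sum.elim params fun _ => x)

/-!
Zorn's lemma gives a subgroup `C` maximal among those with `C ∩ Δ* = 0` and `C + Δ*` pure
(`Δ*` itself is pure, being convex). Suppose some `γ` lies outside `W = C + Δ*`. In the
torsion-free group `Γ*/W`, the integers `n` dividing `γ` are closed under `lcm`, so there is a
chain `d₀ ∣ d₁ ∣ ⋯` of them, cofinal for divisibility. Lifts `γₖ` of `dₖ`-th roots of `γ` are
compatible only modulo `W`; writing the defects as `cₖ + δₖ` with `cₖ ∈ C`, `δₖ ∈ Δ*`,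
ℵ₁-saturation realizes the countable type that moves each `γₖ` within `Δ*` to a system with
`yₖ = mₖ • yₖ₊₁ - cₖ` on the nose. Adjoining all `yₖ` to `C` keeps both properties, contradicting
maximality. Hence `Γ* = C ⊕ Δ*`, and convexity of `Δ*` makes `c + δ ↦ (c, δ)` an order
isomorphism onto `C ×ₗ Δ*` (with `C ≅ Γ*/Δ*`).
-/

open Language AddSubgroup

section Divisibility

variable {Q : Type*} [AddCommGroup Q]

theorem exists_zsmul_eq_of_isCoprime {a b : ℤ} (hab : IsCoprime a b) {z q : Q}
    (h : a • z = b • q) : ∃ x : Q, a • x = q := by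
  obtain ⟨u, v, huv⟩ := hab
  exact ⟨v • z + u • q, by linear_combination (norm := module) v • h + huv • q⟩

theorem exists_lcm_nsmul_eq {n k : ℕ} {x x' q : Q} (hx : n • x = q) (hx' : k • x' = q) :
    ∃ z : Q, Nat.lcm n k • z = q := by
  obtain ⟨n', k', hcop, hn, hk⟩ := Nat.exists_coprime n k
  obtain ⟨u, v, huv⟩ := Nat.isCoprime_iff_coprime.mpr hcop
  set g := Nat.gcd n k
  have hl : Nat.lcm n k = n' * k' * g := by
    rw [hn, hk, Nat.lcm_mul_right, hcop.lcm_eq_mul]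
  refine ⟨v • x + u • x', ?_⟩
  rw [hn, ← natCast_zsmul] at hx
  rw [hk, ← natCast_zsmul] at hx'
  rw [hl, ← natCast_zsmul]
  push_cast at hx hx' ⊢
  linear_combination (norm := module) (v * k') • hx + (u * n') • hx' + huv • q

-- Cancelling `gcd (n * d k) N` gives `a • z = b • q` with `a, b` coprime, so `a` divides `q`,
-- hence `a ∣ d K` for some `K`, and then `z = (b * (d K / a)) • y K`.
theorem exists_eq_zsmul_of_nsmul_eq_zsmul [IsAddTorsionFree Q] {q : Q} {d : ℕ → ℕ} {y : ℕ → Q}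
    (hy : ∀ k, d k • y k = q) (hcof : ∀ n : ℕ, (∃ x, n • x = q) → ∃ K, n ∣ d K)
    {n k : ℕ} (hn : n ≠ 0) (hk : d k ≠ 0) {z : Q} {N : ℤ} (hz : n • z = N • y k) :
    ∃ K, ∃ M : ℤ, z = M • y K := by
  have hnd : ((n * d k : ℕ) : ℤ) • z = N • q := by
    rw [← hy k, ← natCast_zsmul] at *
    push_cast at hz ⊢
    linear_combination (norm := module) (d k : ℤ) • hz
  obtain ⟨g, a, b, hg, hab, hna, hNb⟩ :=
    Int.exists_gcd_one' (Int.gcd_pos_of_ne_zero_left (a := ((n * d k : ℕ) : ℤ)) N (by positivity))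
  have ha : 0 < a := pos_of_mul_pos_left (hna ▸ by positivity : (0 : ℤ) < a * g) (Int.natCast_nonneg g)
  lift a to ℕ using ha.le
  have hazb : (a : ℤ) • z = b • q := zsmul_right_injective (by positivity : (g : ℤ) ≠ 0) <| by
    simp only [smul_smul, mul_comm (g : ℤ), ← hna, ← hNb, hnd]
  obtain ⟨x, hx⟩ := exists_zsmul_eq_of_isCoprime (Int.isCoprime_iff_gcd_eq_one.mpr hab) hazb
  obtain ⟨K, s, hs⟩ := hcof a ⟨x, by rwa [← natCast_zsmul]⟩
  refine ⟨K, b * s, zsmul_right_injective (by exact_mod_cast ha.ne' : (a : ℤ) ≠ 0) ?_⟩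
  simp only
  rw [hazb, ← hy K, hs, ← natCast_zsmul]
  push_cast
  module

end Divisibility

theorem exists_dvd_chain_cofinal (T : Set ℕ) (h1 : 1 ∈ T)
    (hlcm : ∀ n ∈ T, ∀ k ∈ T, Nat.lcm n k ∈ T) :
    ∃ d : ℕ → ℕ, (∀ k, d k ∈ T) ∧ (∀ k, d k ∣ d (k + 1)) ∧ ∀ n ∈ T, n ∣ d n := by
  classical
  have hmem : ∀ s : Finset ℕ, (∀ n ∈ s, n ∈ T) → s.lcm id ∈ T := by
    intro s
    induction s using Finset.induction_on with
    | empty => simpa using h1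
    | insert a s _ ih =>
      intro hs
      rw [Finset.lcm_insert]
      exact hlcm _ (hs a (Finset.mem_insert_self a s))
        _ (ih fun n hn => hs n (Finset.mem_insert_of_mem hn))
  refine ⟨fun k => ((Finset.range (k + 1)).filter (· ∈ T)).lcm id,
    fun k => hmem _ fun n hn => (Finset.mem_filter.mp hn).2,
    fun k => Finset.lcm_mono (Finset.filter_subset_filter _ (Finset.range_subset_range.mpr (by omega))),
    fun n hn => Finset.dvd_lcm (Finset.mem_filter.mpr ⟨Finset.mem_range.mpr (by omega), hn⟩)⟩

section Subgroups

variable {G : Type*} [AddCommGroup G]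

theorem isAddTorsionFree_quotient {W : AddSubgroup G} (hW : W.NSMulSaturated) :
    IsAddTorsionFree (G ⧸ W) := by
  refine ⟨fun n hn a b hab => ?_⟩
  induction a using QuotientAddGroup.induction_on
  induction b using QuotientAddGroup.induction_on
  rename_i a b
  simp only at hab
  rw [← QuotientAddGroup.mk_nsmul, ← QuotientAddGroup.mk_nsmul, QuotientAddGroup.eq] at hab
  rw [QuotientAddGroup.eq]
  exact (hW (by rwa [smul_add, smul_neg])).resolve_left hn

theorem sup_zmultiples_sup_eq_comap (C Δ : AddSubgroup G) (y : G) :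
    C ⊔ zmultiples y ⊔ Δ = (zmultiples (y : G ⧸ C ⊔ Δ)).comap (QuotientAddGroup.mk' (C ⊔ Δ)) := by
  rw [← QuotientAddGroup.coe_mk', ← AddMonoidHom.map_zmultiples, comap_map_eq,
    QuotientAddGroup.ker_mk', sup_right_comm, sup_comm (zmultiples y)]

def IsSaturatedDisjoint (Δ C : AddSubgroup G) : Prop :=
  Disjoint C Δ ∧ (C ⊔ Δ).NSMulSaturated

variable {Δ : AddSubgroup G}

theorem isSaturatedDisjoint_sSup {c : Set (AddSubgroup G)} (hc : IsChain (· ≤ ·) c)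
    (hne : c.Nonempty) (h : ∀ C ∈ c, IsSaturatedDisjoint Δ C) : IsSaturatedDisjoint Δ (sSup c) := by
  have hmem : ∀ {x}, x ∈ sSup c ↔ ∃ C ∈ c, x ∈ C := mem_sSup_of_directedOn hne hc.directedOn
  refine ⟨disjoint_def.mpr fun hx hxΔ => ?_, fun n z hz => ?_⟩
  · obtain ⟨C, hC, hxC⟩ := hmem.mp hx
    exact disjoint_def.mp (h C hC).1 hxC hxΔ
  · obtain ⟨u, hu, δ, hδ, hsum⟩ := mem_sup.mp hz
    obtain ⟨C, hC, huC⟩ := hmem.mp hu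
    exact ((h C hC).2 (mem_sup.mpr ⟨u, huC, δ, hδ, hsum⟩)).imp_right
      fun hzC => sup_le_sup_right (le_sSup hC) Δ hzC

theorem IsSaturatedDisjoint.exists_gt {C : AddSubgroup G} (hC : IsSaturatedDisjoint Δ C)
    {q : G ⧸ C ⊔ Δ} (hq : q ≠ 0) {d : ℕ → ℕ} {y : ℕ → G} (hy : ∀ k, d k • (y k : G ⧸ C ⊔ Δ) = q)
    (hcof : ∀ n : ℕ, (∃ x, n • x = q) → ∃ K, n ∣ d K)
    (hmono : ∀ k, y k ∈ C ⊔ zmultiples (y (k + 1))) :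
    ∃ C', IsSaturatedDisjoint Δ C' ∧ C < C' := by
  have := isAddTorsionFree_quotient hC.2
  set V : ℕ → AddSubgroup G := fun k => C ⊔ zmultiples (y k)
  have hV : Monotone V := monotone_nat_of_le_succ fun k =>
    sup_le le_sup_left (zmultiples_le_of_mem (hmono k))
  have hd : ∀ k, d k ≠ 0 := fun k h => hq (by rw [← hy k, h, zero_smul])
  have hy0 : ∀ k (N : ℤ), N • (y k : G ⧸ C ⊔ Δ) = 0 → N = 0 := fun k N h =>
    (IsAddTorsionFree.zsmul_eq_zero_iff_left hq).mp <| by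
      rw [← hy k, smul_comm, h, smul_zero]
  refine ⟨⨆ k, V k, ⟨disjoint_def.mpr fun hx hxΔ => ?_, fun n z (hz : n • z ∈ (⨆ k, V k) ⊔ Δ) =>
    show n = 0 ∨ z ∈ (⨆ k, V k) ⊔ Δ from ?_⟩, ?_⟩
  · obtain ⟨k, hx⟩ := (mem_iSup_of_directed hV.directed_le).mp hx
    obtain ⟨c, hc, _, ⟨N, rfl⟩, rfl⟩ := mem_sup.mp hx
    have hN : N = 0 := hy0 k N <| by
      have hsum := (QuotientAddGroup.eq_zero_iff _).mpr (mem_sup_right hxΔ : c + N • y k ∈ C ⊔ Δ)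
      rwa [QuotientAddGroup.mk_add, (QuotientAddGroup.eq_zero_iff _).mpr (mem_sup_left hc),
        zero_add, QuotientAddGroup.mk_zsmul] at hsum
    subst hN
    simp only [zero_smul, add_zero] at hxΔ ⊢
    exact disjoint_def.mp hC.1 hc hxΔ
  · have hVΔ : Monotone fun k => V k ⊔ Δ := fun i j hij => sup_le_sup_right (hV hij) Δ
    rw [iSup_sup, mem_iSup_of_directed hVΔ.directed_le] at hz ⊢
    refine or_iff_not_imp_left.mpr fun hn => ?_
    obtain ⟨k, hk⟩ := hz
    rw [sup_zmultiples_sup_eq_comap, mem_comap, mem_zmultiples_iff] at hk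
    obtain ⟨N, hN⟩ := hk
    obtain ⟨K, M, hM⟩ := exists_eq_zsmul_of_nsmul_eq_zsmul hy hcof hn (hd k)
      (z := (z : G ⧸ C ⊔ Δ)) hN.symm
    refine ⟨K, ?_⟩
    rw [sup_zmultiples_sup_eq_comap, mem_comap, mem_zmultiples_iff]
    exact ⟨M, hM.symm⟩
  · refine SetLike.lt_iff_le_and_exists.mpr ⟨le_iSup_of_le 0 le_sup_left,
      y 0, le_iSup V 0 (mem_sup_right (mem_zmultiples _)), fun hy0C => one_ne_zero (hy0 0 1 ?_)⟩
    rw [one_smul]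
    exact (QuotientAddGroup.eq_zero_iff _).mpr (mem_sup_left hy0C)

end Subgroups

namespace oagPLang

variable {α : Type*}

def add (t u : oagPLang.Term α) : oagPLang.Term α := Term.func (l := 2) () ![t, u]

def neg (t : oagPLang.Term α) : oagPLang.Term α := Term.func (l := 1) () ![t]

def nsmul : ℕ → oagPLang.Term α → oagPLang.Term α
  | 0, _ => Term.func (l := 0) () ![]
  | n + 1, t => add (nsmul n t) t

/-- `∃ y, x = d • y - p i ∧ P (y - p j)`, where `x` is the free variable and `p` the parameters. -/
def divisibilityFormula (d i j : ℕ) : oagPLang.Formula (ℕ ⊕ Unit) :=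
  BoundedFormula.ex
    ((Term.bdEqual (Term.var (Sum.inl (Sum.inr ())))
        (add (nsmul d (Term.var (Sum.inr 0))) (neg (Term.var (Sum.inl (Sum.inl i)))))) ⊓
      Relations.boundedFormula₁ (L := oagPLang) ()
        (add (Term.var (Sum.inr 0)) (neg (Term.var (Sum.inl (Sum.inl j))))))

variable {G : Type*} [AddCommGroup G] [LinearOrder G] [IsOrderedAddMonoid G] (Δ : AddSubgroup G)

theorem realize_nsmul (v : α → G) (n : ℕ) (t : oagPLang.Term α) :
    letI := oagPStructure G Δ
    (nsmul n t).realize v = n • t.realize v := by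
  let := oagPStructure G Δ
  induction n with
  | zero => exact (zero_nsmul _).symm
  | succ n ih => exact (congrArg (· + t.realize v) ih).trans (succ_nsmul _ n).symm

theorem realize_divisibilityFormula (d i j : ℕ) (v : ℕ ⊕ Unit → G) :
    letI := oagPStructure G Δ
    (divisibilityFormula d i j).Realize v ↔
      ∃ y : G, v (Sum.inr ()) = d • y - v (Sum.inl i) ∧ y - v (Sum.inl j) ∈ Δ := by
  let := oagPStructure G Δ
  refine BoundedFormula.realize_ex.trans (exists_congr fun y =>
    BoundedFormula.realize_inf.trans (and_congr ?_ ?_))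
  · change v (Sum.inr ()) = (nsmul d _).realize _ + -_ ↔ _
    rw [realize_nsmul, sub_eq_add_neg]
    rfl
  · change _ + -_ ∈ Δ ↔ _
    rw [sub_eq_add_neg]
    rfl

end oagPLang

section Ordered

variable {G : Type*} [AddCommGroup G] [LinearOrder G] [IsOrderedAddMonoid G] {Δ : AddSubgroup G}

theorem nsmulSaturated_of_convex (hconv : ∀ γ δ : G, 0 ≤ γ → γ ≤ δ → δ ∈ Δ → γ ∈ Δ) :
    Δ.NSMulSaturated := by
  intro n z (hz : n • z ∈ Δ)
  refine or_iff_not_imp_left.mpr fun hn => (abs_mem_iff.mp ?_ : z ∈ Δ)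
  exact hconv _ (n • |z|) (abs_nonneg z) (le_self_nsmul (abs_nonneg z) hn)
    (by rw [← abs_nsmul]; exact abs_mem_iff.mpr hz)

-- The `k`-th formula says `x = Dₖ • y - Eₖ` with `y ≡ γₖ` modulo `Δ`; the witness
-- `D_K • γ_K - E_K` realizes the first `K` of them, and in a realization of all of them `Dₖ`
-- cancels from `Dₖ • yₖ - Eₖ = Dₖ₊₁ • yₖ₊₁ - Eₖ₊₁`.
theorem exists_coherent_of_alephOneSaturated
    (hsat : @AlephOneSaturated oagPLang G (oagPStructure G Δ))
    (m : ℕ → ℕ) (hm : ∀ k, m k ≠ 0) (γ c : ℕ → G)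
    (h : ∀ k, m k • γ (k + 1) - γ k - c k ∈ Δ) :
    ∃ y : ℕ → G, (∀ k, y k - γ k ∈ Δ) ∧ ∀ k, y k = m k • y (k + 1) - c k := by
  let := oagPStructure G Δ
  set D : ℕ → ℕ := fun k => ∏ i ∈ Finset.range k, m i with hD
  set E : ℕ → G := fun k => ∑ i ∈ Finset.range k, D i • c i with hE
  set Holds : ℕ → G → Prop := fun k x => ∃ y, x = D k • y - E k ∧ y - γ k ∈ Δ
  set params : ℕ → G := fun n => Sum.elim E γ (Equiv.natSumNatEquivNat.symm n)
  set φ : ℕ → oagPLang.Formula (ℕ ⊕ Unit) := fun k =>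
    oagPLang.divisibilityFormula (D k) (Equiv.natSumNatEquivNat (.inl k))
      (Equiv.natSumNatEquivNat (.inr k))
  have hφ : ∀ k x, (φ k).Realize (Sum.elim params fun _ => x) ↔ Holds k x := fun k x => by
    simp [φ, oagPLang.realize_divisibilityFormula, params, Holds]
  have hshift : ∀ j x N δ, D j ∣ N → δ ∈ Δ → Holds j x → Holds j (x + N • δ) := by
    rintro j x _ δ ⟨s, rfl⟩ hδ ⟨y, rfl, hy⟩
    refine ⟨y + s • δ, by module, ?_⟩
    rw [add_sub_right_comm]
    exact Δ.add_mem hy (Δ.nsmul_mem hδ s)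
  have hholds : ∀ j K, j ≤ K → Holds j (D K • γ K - E K) := by
    intro j K hjK
    induction K, hjK using Nat.le_induction with
    | base => exact ⟨γ j, rfl, by simp⟩
    | succ K hjK ih =>
      have hstep : D (K + 1) • γ (K + 1) - E (K + 1)
          = D K • γ K - E K + D K • (m K • γ (K + 1) - γ K - c K) := by
        simp only [hD, hE, Finset.prod_range_succ, Finset.sum_range_succ]
        module
      rw [hstep]
      exact hshift j _ _ _ (Finset.prod_dvd_prod_of_subset _ _ _
        (Finset.range_subset_range.mpr hjK)) (h K) ih
  obtain ⟨x, hx⟩ := hsat params (Set.range φ) fun s hs => by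
    classical
    choose! idx hidx using fun ψ (hψ : ψ ∈ s) => hs hψ
    refine ⟨D (s.sup idx) • γ (s.sup idx) - E (s.sup idx), fun ψ hψ => ?_⟩
    rw [← hidx ψ hψ, hφ]
    exact hholds _ _ (Finset.le_sup hψ)
  choose y hxy hyγ using fun k => (hφ k x).mp (hx _ ⟨k, rfl⟩)
  refine ⟨y, hyγ, fun k => nsmul_right_injective
    (Finset.prod_ne_zero_iff.mpr fun i _ => hm i : D k ≠ 0) ?_⟩
  have hk := (hxy k).symm.trans (hxy (k + 1))
  simp only [hD, hE, Finset.prod_range_succ, Finset.sum_range_succ] at hk ⊢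
  linear_combination (norm := module) hk

theorem IsSaturatedDisjoint.exists_gt_of_notMem
    (hsat : @AlephOneSaturated oagPLang G (oagPStructure G Δ)) {C : AddSubgroup G}
    (hC : IsSaturatedDisjoint Δ C) {γ : G} (hγ : γ ∉ C ⊔ Δ) :
    ∃ C', IsSaturatedDisjoint Δ C' ∧ C < C' := by
  have := isAddTorsionFree_quotient hC.2
  set q : G ⧸ C ⊔ Δ := (γ : G ⧸ C ⊔ Δ)
  have hq : q ≠ 0 := fun h => hγ ((QuotientAddGroup.eq_zero_iff γ).mp h)
  obtain ⟨d, hdT, hdvd, hcof⟩ := exists_dvd_chain_cofinal {n | ∃ x, n • x = q} ⟨q, one_nsmul q⟩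
    fun n ⟨x, hx⟩ k ⟨x', hx'⟩ => exists_lcm_nsmul_eq hx hx'
  choose x hx using hdT
  choose γs hγs using fun k => QuotientAddGroup.mk_surjective (x k)
  have hd : ∀ k, d k ≠ 0 := fun k h => hq (by rw [← hx k, h, zero_smul])
  choose m hm using hdvd
  have hrel : ∀ k, m k • γs (k + 1) - γs k ∈ C ⊔ Δ := fun k => by
    rw [← QuotientAddGroup.eq_zero_iff]
    refine nsmul_right_injective (hd k) ?_
    simp only [QuotientAddGroup.mk_sub, QuotientAddGroup.mk_nsmul, hγs, smul_sub, smul_smul,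
      smul_zero, ← hm, hx, sub_self]
  choose c hc δ hδ hcδ using fun k => mem_sup.mp (hrel k)
  obtain ⟨y, hyγ, hy⟩ := exists_coherent_of_alephOneSaturated hsat m
    (fun k h => hd (k + 1) (by rw [hm, h, mul_zero])) γs c
    fun k => by rw [← hcδ k, add_sub_cancel_left]; exact hδ k
  refine hC.exists_gt hq (d := d) (y := y) (fun k => ?_) (fun n hn => ⟨n, hcof n hn⟩)
    fun k => hy k ▸ sub_mem (mem_sup_right (nsmul_mem (mem_zmultiples _) _)) (mem_sup_left (hc k))
  rw [← hx k, ← hγs k]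
  congr 1
  rw [QuotientAddGroup.eq_iff_sub_mem]
  exact mem_sup_right (hyγ k)

theorem exists_isCompl_of_alephOneSaturated
    (hconv : ∀ γ δ : G, 0 ≤ γ → γ ≤ δ → δ ∈ Δ → γ ∈ Δ)
    (hsat : @AlephOneSaturated oagPLang G (oagPStructure G Δ)) :
    ∃ C : AddSubgroup G, IsCompl C Δ := by
  obtain ⟨C, -, hC⟩ := zorn_le_nonempty₀ {C | IsSaturatedDisjoint Δ C}
    (fun c hcS hc D hD => ⟨sSup c, isSaturatedDisjoint_sSup hc ⟨D, hD⟩ hcS, fun _ => le_sSup⟩) ⊥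
    ⟨disjoint_bot_left, by simpa using nsmulSaturated_of_convex hconv⟩
  refine ⟨C, hC.prop.1, codisjoint_iff.mpr (eq_top_iff.mpr fun γ _ => by_contra fun hγ => ?_)⟩
  obtain ⟨C', hC', hlt⟩ := hC.prop.exists_gt_of_notMem hsat hγ
  exact hC.not_gt hC' hlt

theorem exists_addEquiv_lex_of_isCompl (hconv : ∀ γ δ : G, 0 ≤ γ → γ ≤ δ → δ ∈ Δ → γ ∈ Δ)
    {C : AddSubgroup G} (hC : IsCompl C Δ) :
    ∃ e : G ≃+ Lex (C × Δ), StrictMono e ∧ ∀ d : Δ, e d = toLex (0, d) := by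
  set f : C × Δ →+ G := C.subtype.coprod Δ.subtype
  have hf : Function.Bijective f := by
    refine ⟨add_injective_of_disjoint hC.disjoint, fun x => ?_⟩
    obtain ⟨c, hc, d, hd, rfl⟩ := mem_sup.mp (hC.sup_eq_top ▸ mem_top x)
    exact ⟨(⟨c, hc⟩, ⟨d, hd⟩), rfl⟩
  have hmono : StrictMono fun p : Lex (C × Δ) => f (ofLex p) := by
    rintro ⟨c, d⟩ ⟨c', d'⟩ hlt
    show (c : G) + d < c' + d'
    rcases Prod.Lex.toLex_lt_toLex.mp hlt with hc | ⟨rfl, hd⟩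
    · have hc : (c : G) < c' := hc
      have hnot : (c' : G) - c ∉ Δ := fun h => hc.ne' <| sub_eq_zero.mp <|
        disjoint_def.mp hC.disjoint (C.sub_mem c'.2 c.2) h
      have := lt_of_not_ge fun h => hnot (hconv _ _ (sub_nonneg.mpr hc.le) h (Δ.sub_mem d.2 d'.2))
      calc (c : G) + d = d + c := add_comm _ _
        _ < c' + d' := sub_lt_sub_iff.mp this
    · exact add_lt_add_right (show (d : G) < d' from hd) _
  set e := (AddEquiv.ofBijective f hf).symm.trans (toLexAddEquiv (C × Δ))
  have hfe : ∀ x, f (ofLex (e x)) = x := fun x => (AddEquiv.ofBijective f hf).apply_symm_apply x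
  refine ⟨e, fun x y hxy => ?_, fun d => ?_⟩
  · rwa [← hmono.lt_iff_lt, hfe, hfe]
  · refine (e.symm_apply_eq.mp ?_).symm
    simp [e, f]

end Ordered

theorem saturated_pair_splits_general
    {Γs : Type v}
    [AddCommGroup Γs] [LinearOrder Γs] [IsOrderedAddMonoid Γs]
    (Δs : AddSubgroup Γs) (hconvs : ∀ γ δ : Γs, 0 ≤ γ → γ ≤ δ → δ ∈ Δs → γ ∈ Δs)
    (hsat : @AlephOneSaturated oagPLang Γs (oagPStructure Γs Δs)) :
    ∃ (Q : Type v) (_ : AddCommGroup Q) (_ : LinearOrder Q) (_ : IsOrderedAddMonoid Q) (e : Γs ≃+ Lex (Q × ↥Δs)),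
      StrictMono e ∧ ∀ d : ↥Δs, e (d : Γs) = toLex (0, d) := by
  obtain ⟨C, hC⟩ := exists_isCompl_of_alephOneSaturated hconvs hsat
  obtain ⟨e, he, hed⟩ := exists_addEquiv_lex_of_isCompl hconvs hC
  exact ⟨C, inferInstance, inferInstance, inferInstance, e, he, hed⟩

/-- Let `Γ` be an ordered abelian group with a convex subgroup `Δ`, and
let `(Γ*, Δ*)` be an `ℵ₁`-saturated elementary extension of the pair `(Γ, Δ)` (in the
language of ordered abelian groups with a predicate for the subgroup). Then the short
exact sequence `0 → Δ* → Γ* → Γ*/Δ* → 0` splits: `Γ*` is isomorphic, as an ordered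
abelian group, to the lexicographic sum `(Γ*/Δ*) ⊕_lex Δ*` (via an isomorphism that is
the identity on `Δ*`, so that the first factor is identified with the quotient
`Γ*/Δ*`). -/
theorem saturated_pair_splits
    {Γ : Type u} {Γs : Type v}
    [AddCommGroup Γ] [LinearOrder Γ] [IsOrderedAddMonoid Γ]
    [AddCommGroup Γs] [LinearOrder Γs] [IsOrderedAddMonoid Γs]
    (Δ : AddSubgroup Γ) (hconv : ∀ γ δ : Γ, 0 ≤ γ → γ ≤ δ → δ ∈ Δ → γ ∈ Δ)
    (Δs : AddSubgroup Γs) (hconvs : ∀ γ δ : Γs, 0 ≤ γ → γ ≤ δ → δ ∈ Δs → γ ∈ Δs)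
    (hext : Nonempty
      (@Language.ElementaryEmbedding oagPLang Γ Γs (oagPStructure Γ Δ) (oagPStructure Γs Δs)))
    (hsat : @AlephOneSaturated oagPLang Γs (oagPStructure Γs Δs)) :
    ∃ (Q : Type v) (_ : AddCommGroup Q) (_ : LinearOrder Q) (_ : IsOrderedAddMonoid Q) (e : Γs ≃+ Lex (Q × ↥Δs)),
      StrictMono e ∧ ∀ d : ↥Δs, e (d : Γs) = toLex (0, d) :=
  saturated_pair_splits_general Δs hconvs hsat
end

section
/- Let F = 𝔽_p(t)^perf be the perfect closure of the rational function field over a prime field 𝔽_p with p > 3. Then every solution (x,y) ∈ F² of the equation y² = x³ + 1 has x, y ∈ 𝔽_p (i.e. both coordinates lie in the algebraic closure of the prime field inside F, which is 𝔽_p). -/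
/-!
Writing a solution over `k(t)` as `x = A / D`, `y = B / E` in lowest terms with monic
denominators, coprimality forces `E² = D³`, so `D = G²`, `E = G³` and `B² = A³ + G⁶`. Since
`1/2 + 1/3 + 1/6 = 1`, the Mason–Stothers theorem (in the form `Polynomial.flt_catalan`, whose
descent through `p`-th roots also covers positive characteristic) makes `A`, `B`, `G` constant.
Over the perfect closure some `p^n`-th power of a solution is a solution over `𝔽_p(t)`, hence
constant, and elements of `𝔽_p` are fixed by Frobenius.
-/

open Polynomial

theorem Polynomial.natDegree_eq_zero_of_sq_eq_cube_add_pow_six {k : Type*} [Field k]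
    (h2 : (2 : k) ≠ 0) (h3 : (3 : k) ≠ 0) {A B G : k[X]} (hG : G ≠ 0) (hAG : IsCoprime A G)
    (h : B ^ 2 = A ^ 3 + G ^ 6) :
    A.natDegree = 0 ∧ B.natDegree = 0 ∧ G.natDegree = 0 := by
  by_cases hA : A = 0
  · subst hA
    have hGu : IsUnit G := isCoprime_zero_left.mp hAG
    have hBu : IsUnit B := by
      rw [← isUnit_pow_iff two_ne_zero, h]
      simpa using hGu.pow 6
    exact ⟨natDegree_zero, natDegree_eq_zero_of_isUnit hBu, natDegree_eq_zero_of_isUnit hGu⟩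
  by_cases hB : B = 0
  · subst hB
    have hA3 : A ^ 3 = -G ^ 6 := by linear_combination -h
    have hGu : IsUnit (G ^ 6) :=
      (IsCoprime.pow hAG).isUnit_of_dvd' (by rw [hA3, dvd_neg]) dvd_rfl
    have hAu : IsUnit (A ^ 3) := by rw [hA3]; exact hGu.neg
    exact ⟨natDegree_eq_zero_of_isUnit ((isUnit_pow_iff three_ne_zero).mp hAu), natDegree_zero,
      natDegree_eq_zero_of_isUnit ((isUnit_pow_iff (by norm_num)).mp hGu)⟩
  have hBA : IsCoprime B A := by
    have hA3B2 : IsCoprime (A ^ 3) (G ^ 6 + A ^ 3 * 1) := hAG.pow.add_mul_left_right 1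
    rw [mul_one, add_comm, ← h] at hA3B2
    exact (IsCoprime.pow_iff two_pos three_pos).mp hA3B2.symm
  have h6 : ((6 : ℕ) : k) ≠ 0 := by
    rw [show ((6 : ℕ) : k) = 2 * 3 by norm_num]
    exact mul_ne_zero h2 h3
  have heq : C (1 : k) * B ^ 2 + C (-1) * A ^ 3 + C (-1) * G ^ 6 = 0 := by
    simp only [map_one, map_neg, one_mul, neg_one_mul]
    linear_combination h
  obtain ⟨hB0, hA0, hG0⟩ := flt_catalan two_ne_zero three_ne_zero (by norm_num : 6 ≠ 0)
    (by norm_num) (by exact_mod_cast h2) (by exact_mod_cast h3) h6 hB hA hG hBA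
    one_ne_zero (neg_ne_zero.mpr one_ne_zero) (neg_ne_zero.mpr one_ne_zero) heq
  exact ⟨hA0, hB0, hG0⟩

theorem exists_eq_sq_and_eq_cube_of_cube_eq_sq {R : Type*} [CommRing R] [IsDomain R]
    [IsIntegrallyClosed R] {D E : R} (hD : D ≠ 0) (h : D ^ 3 = E ^ 2) :
    ∃ G, D = G ^ 2 ∧ E = G ^ 3 := by
  have hDE : D ∣ E := by
    rw [← IsIntegrallyClosed.pow_dvd_pow_iff three_ne_zero, h]
    exact pow_dvd_pow E (by norm_num)
  obtain ⟨G, rfl⟩ := hDE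
  have hDG : D = G ^ 2 := mul_left_cancel₀ (pow_ne_zero 2 hD) (by linear_combination h)
  exact ⟨G, hDG, by rw [hDG]; ring⟩

theorem RatFunc.exists_eq_algebraMap_of_natDegree_eq_zero {k : Type*} [Field k] {x : RatFunc k}
    (hnum : x.num.natDegree = 0) (hdenom : x.denom.natDegree = 0) :
    ∃ a : k, x = algebraMap k (RatFunc k) a := by
  have h1 : x.denom = 1 := x.monic_denom.natDegree_eq_zero.mp hdenom
  obtain ⟨a, ha⟩ : ∃ a, x.num = Polynomial.C a := ⟨_, Polynomial.eq_C_of_natDegree_eq_zero hnum⟩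
  refine ⟨a, ?_⟩
  rw [← x.num_div_denom, h1, ha, map_one, div_one, RatFunc.algebraMap_C, RatFunc.algebraMap_eq_C]

theorem RatFunc.exists_eq_algebraMap_of_sq_eq_cube_add_one {k : Type*} [Field k]
    (h2 : (2 : k) ≠ 0) (h3 : (3 : k) ≠ 0) {x y : RatFunc k} (h : y ^ 2 = x ^ 3 + 1) :
    ∃ a b : k, x = algebraMap k (RatFunc k) a ∧ y = algebraMap k (RatFunc k) b := by
  set A := x.num
  set D := x.denom
  set B := y.num
  set E := y.denom
  have hD : D ≠ 0 := x.denom_ne_zero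
  have hE : E ≠ 0 := y.denom_ne_zero
  have key : B ^ 2 * D ^ 3 = E ^ 2 * (A ^ 3 + D ^ 3) := by
    apply RatFunc.algebraMap_injective k
    have hx := x.num_div_denom
    have hy := y.num_div_denom
    rw [div_eq_iff (RatFunc.algebraMap_ne_zero hD)] at hx
    rw [div_eq_iff (RatFunc.algebraMap_ne_zero hE)] at hy
    simp only [map_mul, map_pow, map_add]
    rw [hx, hy]
    linear_combination (algebraMap _ (RatFunc k) D ^ 3 * algebraMap _ (RatFunc k) E ^ 2) * h
  have hED : E ^ 2 = D ^ 3 := by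
    refine eq_of_monic_of_associated (y.monic_denom.pow 2) (x.monic_denom.pow 3)
      (associated_of_dvd_dvd ?_ ?_)
    · exact (y.isCoprime_num_denom.symm.pow (m := 2) (n := 2)).dvd_of_dvd_mul_left
        ⟨A ^ 3 + D ^ 3, by linear_combination key⟩
    · exact (x.isCoprime_num_denom.symm.pow (m := 3) (n := 3)).dvd_of_dvd_mul_right
        ⟨B ^ 2 - E ^ 2, by linear_combination -key⟩
  obtain ⟨G, hDG, hEG⟩ := exists_eq_sq_and_eq_cube_of_cube_eq_sq hD hED.symm
  have hG : G ≠ 0 := by rintro rfl; exact hD (by simpa using hDG)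
  have hAG : IsCoprime A G := (IsCoprime.pow_right_iff two_pos).mp (hDG ▸ x.isCoprime_num_denom)
  have hBAG : B ^ 2 = A ^ 3 + G ^ 6 := by
    refine mul_right_cancel₀ (pow_ne_zero 3 hD) ?_
    rw [key, hED, hDG]
    ring
  obtain ⟨hA0, hB0, hG0⟩ := natDegree_eq_zero_of_sq_eq_cube_add_pow_six h2 h3 hG hAG hBAG
  have hD0 : D.natDegree = 0 := by rw [hDG, natDegree_pow, hG0, mul_zero]
  have hE0 : E.natDegree = 0 := by rw [hEG, natDegree_pow, hG0, mul_zero]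
  obtain ⟨a, rfl⟩ := exists_eq_algebraMap_of_natDegree_eq_zero hA0 hD0
  obtain ⟨b, rfl⟩ := exists_eq_algebraMap_of_natDegree_eq_zero hB0 hE0
  exact ⟨a, b, rfl, rfl⟩

theorem IsPRadical.pow_mem_pair {K L : Type*} [CommSemiring K] [CommSemiring L]
    (i : K →+* L) (p : ℕ) [IsPRadical i p] (x y : L) :
    ∃ n a b, i a = x ^ p ^ n ∧ i b = y ^ p ^ n := by
  obtain ⟨n, a, ha⟩ := IsPRadical.pow_mem i p x
  obtain ⟨m, b, hb⟩ := IsPRadical.pow_mem i p y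
  refine ⟨n + m, a ^ p ^ m, b ^ p ^ n, ?_, ?_⟩
  · rw [map_pow, ha, ← pow_mul, ← pow_add]
  · rw [map_pow, hb, ← pow_mul, ← pow_add, add_comm]

theorem ZMod.eq_apply_of_pow_pow_eq_apply {p : ℕ} [Fact p.Prime] {R : Type*} [CommRing R]
    [IsReduced R] [CharP R p] (φ : ZMod p →+* R) {x : R} {a : ZMod p} {n : ℕ}
    (h : x ^ p ^ n = φ a) : x = φ a :=
  iterateFrobenius_inj R p n <| by
    rw [iterateFrobenius_def, iterateFrobenius_def, h, ← map_pow, ZMod.pow_card_pow]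

/-- Let `F = 𝔽_p(t)^perf` be the perfect closure of the rational
function field over `𝔽_p`, `p > 3` prime. Then every solution `(x,y) ∈ F²` of
`y² = x³ + 1` has both coordinates in (the image of) `𝔽_p`. -/
theorem genus_one_curve_constant_points_over_perfect_closure
    (p : ℕ) [Fact p.Prime] (hp : 3 < p) [CharP (RatFunc (ZMod p)) p]
    (x y : PerfectClosure (RatFunc (ZMod p)) p)
    (h : y ^ 2 = x ^ 3 + 1) :
    ∃ a b : ZMod p,
      x = PerfectClosure.of (RatFunc (ZMod p)) p
            (algebraMap (ZMod p) (RatFunc (ZMod p)) a) ∧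
      y = PerfectClosure.of (RatFunc (ZMod p)) p
            (algebraMap (ZMod p) (RatFunc (ZMod p)) b) := by
  set i := PerfectClosure.of (RatFunc (ZMod p)) p
  obtain ⟨n, f, g, hf, hg⟩ := IsPRadical.pow_mem_pair i p x y
  have hfg : g ^ 2 = f ^ 3 + 1 := i.injective <| by
    have hpow := congrArg (iterateFrobenius _ p n) h
    simp only [map_pow, map_add, map_one, iterateFrobenius_def] at hpow
    rw [map_pow, map_add, map_pow, map_one, hf, hg, hpow]
  have hne (m : ℕ) (hm0 : 0 < m) (hmp : m < p) : (m : ZMod p) ≠ 0 := by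
    rw [Ne, ZMod.natCast_eq_zero_iff]
    exact Nat.not_dvd_of_pos_of_lt hm0 hmp
  obtain ⟨a, b, rfl, rfl⟩ := RatFunc.exists_eq_algebraMap_of_sq_eq_cube_add_one
    (by exact_mod_cast hne 2 two_pos (by omega)) (by exact_mod_cast hne 3 three_pos hp) hfg
  exact ⟨a, b, ZMod.eq_apply_of_pow_pow_eq_apply (i.comp (algebraMap _ _)) hf.symm,
    ZMod.eq_apply_of_pow_pow_eq_apply (i.comp (algebraMap _ _)) hg.symm⟩
end
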